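/- For every a > 0 there exists K(a) = (a²+2)·√(1 − (2/(a²+2))²) − (π/(2S(a)))², with S(a) = (2/a)∫_1^∞ du/√((u²+4/a²)(u²−1)), such that K(a)/a² → 3/4 as a → ∞. In particular, for every ε > 0 there is A such that for all a ≥ A, every positive integer k with k² < (3/4 − ε)·a² satisfies k² < K(a). -/

import Mathlib

open Real MeasureTheory Set Filter

noncomputable def heisS (a : ℝ) : ℝ :=
  (2 / a) * ∫ u in Ioi (1 : ℝ), (Real.sqrt ((u ^ 2 + 4 / a ^ 2) * (u ^ 2 - 1)))⁻¹

noncomputable def heisK (a : ℝ) : ℝ :=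
  (a ^ 2 + 2) * Real.sqrt (1 - (2 / (a ^ 2 + 2)) ^ 2) - (Real.pi / (2 * heisS a)) ^ 2

/-!
Since `a * S(a) = 2 J(4 / a²)` with `J(c) = ∫_1^∞ du / √((u² + c)(u² - 1))`, the limit comes down
to `J(c) → J(0) = π / 2` as `c → 0⁺`. The integral `J(0)` is elementary, `arccos (1 / u)` being a
primitive of its integrand, and the limit follows by dominated convergence since `J(c)` decreases
in `c`. Then `K(a) / a² → 1 - (π / (2π))² = 3 / 4`.
-/

lemma hasDerivAt_arccos_inv {u : ℝ} (hu : 1 < u) :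
    HasDerivAt (fun u : ℝ => arccos u⁻¹) (√(u ^ 2 * (u ^ 2 - 1)))⁻¹ u := by
  have hu0 : 0 < u := by linarith
  have hinv : u⁻¹ < 1 := inv_lt_one_of_one_lt₀ hu
  have hsqrt : √(u ^ 2 * (u ^ 2 - 1)) = u ^ 2 * √(1 - u⁻¹ ^ 2) := by
    rw [show u ^ 2 * (u ^ 2 - 1) = (u ^ 2) ^ 2 * (1 - u⁻¹ ^ 2) by field_simp,
      sqrt_mul (by positivity), sqrt_sq (by positivity)]
  have hpos : 0 < √(1 - u⁻¹ ^ 2) := sqrt_pos.mpr (by nlinarith [inv_pos.mpr hu0])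
  refine ((hasDerivAt_arccos (by linarith [inv_pos.mpr hu0]) hinv.ne).comp u
    (hasDerivAt_inv hu0.ne')).congr_deriv ?_
  rw [hsqrt]
  field_simp

lemma tendsto_arccos_inv_atTop : Tendsto (fun u : ℝ => arccos u⁻¹) atTop (nhds (π / 2)) := by
  simpa [Function.comp_def, arccos_zero] using
    (continuous_arccos.tendsto 0).comp tendsto_inv_atTop_zero

lemma continuousWithinAt_arccos_inv :
    ContinuousWithinAt (fun u : ℝ => arccos u⁻¹) (Ici 1) 1 :=
  (continuous_arccos.continuousAt.comp (continuousAt_inv₀ one_ne_zero)).continuousWithinAt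

lemma inv_sqrt_nonneg (x : ℝ) : 0 ≤ (√x)⁻¹ := inv_nonneg.mpr (sqrt_nonneg x)

lemma integrableOn_inv_sqrt_sq_mul_sq_sub_one :
    IntegrableOn (fun u : ℝ => (√(u ^ 2 * (u ^ 2 - 1)))⁻¹) (Ioi 1) :=
  integrableOn_Ioi_deriv_of_nonneg continuousWithinAt_arccos_inv
    (fun _ hu => hasDerivAt_arccos_inv hu) (fun _ _ => inv_sqrt_nonneg _) tendsto_arccos_inv_atTop

lemma integral_inv_sqrt_sq_mul_sq_sub_one :
    ∫ u in Ioi (1 : ℝ), (√(u ^ 2 * (u ^ 2 - 1)))⁻¹ = π / 2 := by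
  rw [integral_Ioi_of_hasDerivAt_of_nonneg continuousWithinAt_arccos_inv
    (fun _ hu => hasDerivAt_arccos_inv hu) (fun _ _ => inv_sqrt_nonneg _) tendsto_arccos_inv_atTop]
  simp [arccos_one]

lemma inv_sqrt_add_mul_le {u c : ℝ} (hu : 1 < u) (hc : 0 ≤ c) :
    (√((u ^ 2 + c) * (u ^ 2 - 1)))⁻¹ ≤ (√(u ^ 2 * (u ^ 2 - 1)))⁻¹ := by
  have hu2 : 0 < u ^ 2 - 1 := by nlinarith
  refine inv_anti₀ (sqrt_pos.mpr (by positivity)) (sqrt_le_sqrt ?_)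
  nlinarith

lemma tendsto_integral_inv_sqrt_add_mul :
    Tendsto (fun c : ℝ => ∫ u in Ioi (1 : ℝ), (√((u ^ 2 + c) * (u ^ 2 - 1)))⁻¹)
      (nhdsWithin 0 (Ici 0)) (nhds (π / 2)) := by
  rw [← integral_inv_sqrt_sq_mul_sq_sub_one]
  refine tendsto_integral_filter_of_dominated_convergence _
    (Eventually.of_forall fun _ => by fun_prop) ?_
    integrableOn_inv_sqrt_sq_mul_sq_sub_one ?_
  · filter_upwards [self_mem_nhdsWithin] with c hc
    refine (ae_restrict_iff' measurableSet_Ioi).mpr (Eventually.of_forall fun u hu => ?_)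
    rw [norm_of_nonneg (inv_sqrt_nonneg _)]
    exact inv_sqrt_add_mul_le hu hc
  · refine (ae_restrict_iff' measurableSet_Ioi).mpr (Eventually.of_forall fun u hu => ?_)
    have hu2 : 0 < u ^ 2 - 1 := by nlinarith [mem_Ioi.mp hu]
    have hcont : ContinuousAt (fun c : ℝ => (√((u ^ 2 + c) * (u ^ 2 - 1)))⁻¹) 0 :=
      (show ContinuousAt (fun c : ℝ => √((u ^ 2 + c) * (u ^ 2 - 1))) 0 by fun_prop).inv₀
        (sqrt_pos.mpr (by nlinarith)).ne'
    simpa using hcont.tendsto.mono_left nhdsWithin_le_nhds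

lemma tendsto_mul_heisS : Tendsto (fun a : ℝ => a * heisS a) atTop (nhds π) := by
  have hc : Tendsto (fun a : ℝ => 4 / a ^ 2) atTop (nhdsWithin 0 (Ici 0)) :=
    tendsto_nhdsWithin_iff.mpr ⟨(tendsto_pow_atTop two_ne_zero).const_div_atTop 4,
      Eventually.of_forall fun a => mem_Ici.mpr (by positivity)⟩
  have hJ := (tendsto_integral_inv_sqrt_add_mul.comp hc).const_mul 2
  rw [show 2 * (π / 2) = π by ring] at hJ
  refine hJ.congr' ((eventually_ne_atTop 0).mono fun a ha => ?_)
  simp only [Function.comp_apply]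
  rw [heisS, ← mul_assoc, mul_div_cancel₀ 2 ha]

lemma heisK_div_sq {a : ℝ} (ha : a ≠ 0) :
    heisK a / a ^ 2 =
      (1 + 2 / a ^ 2) * √(1 - (2 / (a ^ 2 + 2)) ^ 2) - (π / (2 * (a * heisS a))) ^ 2 := by
  rw [heisK, sub_div, mul_div_right_comm, add_div, div_self (pow_ne_zero 2 ha), ← div_pow,
    div_div, mul_comm a, mul_assoc]

lemma tendsto_heisK_div_sq : Tendsto (fun a : ℝ => heisK a / a ^ 2) atTop (nhds (3 / 4)) := by
  have hsq : Tendsto (fun a : ℝ => a ^ 2) atTop atTop := tendsto_pow_atTop two_ne_zero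
  have hfactor : Tendsto (fun a : ℝ => 1 + 2 / a ^ 2) atTop (nhds 1) := by
    simpa using (hsq.const_div_atTop 2).const_add 1
  have hroot : Tendsto (fun a : ℝ => √(1 - (2 / (a ^ 2 + 2)) ^ 2)) atTop (nhds 1) := by
    have h := (tendsto_atTop_add_const_right _ 2 hsq).const_div_atTop 2
    simpa using ((h.pow 2).const_sub 1).sqrt
  have hS : Tendsto (fun a : ℝ => (π / (2 * (a * heisS a))) ^ 2) atTop (nhds (1 / 4)) := by
    have h := ((tendsto_mul_heisS.const_mul 2).inv₀ (by positivity)).const_mul π |>.pow 2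
    convert h using 2
    field_simp
    norm_num
  have h := (hfactor.mul hroot).sub hS
  rw [show (1 : ℝ) * 1 - 1 / 4 = 3 / 4 by norm_num] at h
  exact h.congr' ((eventually_ne_atTop 0).mono fun a ha => (heisK_div_sq ha).symm)

lemma exists_forall_lt_of_tendsto_div_sq {f : ℝ → ℝ} {L ε : ℝ}
    (hf : Tendsto (fun a => f a / a ^ 2) atTop (nhds L)) (hε : 0 < ε) :
    ∃ A, ∀ a, A ≤ a → ∀ x, x < (L - ε) * a ^ 2 → x < f a := by
  obtain ⟨A, hA⟩ := ((hf.eventually (lt_mem_nhds (sub_lt_self L hε))).and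
    (eventually_gt_atTop 0)).exists_forall_of_atTop
  refine ⟨A, fun a ha x hx => hx.trans ?_⟩
  obtain ⟨hlt, ha0⟩ := hA a ha
  exact (lt_div_iff₀ (by positivity)).mp hlt

theorem stmt_16 :
    Tendsto (fun a : ℝ => heisK a / a ^ 2) atTop (nhds (3 / 4)) ∧
    ∀ ε : ℝ, 0 < ε → ∃ A : ℝ, ∀ a : ℝ, A ≤ a → ∀ k : ℕ, 0 < k →
      (k : ℝ) ^ 2 < (3 / 4 - ε) * a ^ 2 → (k : ℝ) ^ 2 < heisK a :=
  ⟨tendsto_heisK_div_sq, fun _ hε =>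
    (exists_forall_lt_of_tendsto_div_sq tendsto_heisK_div_sq hε).imp
      fun _ hA a ha k _ => hA a ha (k ^ 2)⟩
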